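/- Let d, c be natural numbers, let V be a finite set with |V| = d, and let 𝓗 be a hereditary family of subsets of V with |𝓗| ≤ 2^d − c − 1. Then at least d − c vertices v ∈ V have degree at most 2^{d−1} − c − 1 in 𝓗. -/

import Mathlib

/-! The missing sets `𝓜 = 2^V \ 𝓗` form an up-set with more than `c` members, and
`deg_𝓗 v + deg_𝓜 v = 2^(d-1)`, so the vertices of high `𝓗`-degree are exactly those of
`𝓜`-degree at most `c`. Such a vertex `u` is missed by some member of `𝓜`, so `V \ {u} ∈ 𝓜`.
If `v` is one of them, then `V` and the sets `V \ {u}` for the other such `u` all contain `v`,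
so there are at most `deg_𝓜 v ≤ c` of them. -/

def Hereditary {α : Type*} [DecidableEq α] (𝓕 : Finset (Finset α)) : Prop :=
  ∀ F ∈ 𝓕, ∀ F' ⊆ F, F' ∈ 𝓕

open Finset

lemma card_filter_mem_powerset {α : Type*} [DecidableEq α] {V : Finset α} {v : α} (hv : v ∈ V) :
    #{S ∈ V.powerset | v ∈ S} = 2 ^ (#V - 1) := by
  rw [← card_erase_of_mem hv, ← card_powerset]
  refine (card_nbij' (insert v) (erase · v) ?_ ?_ ?_ ?_).symm
  · intro S hS
    rw [mem_coe, mem_powerset, subset_erase] at hS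
    exact mem_filter.2 ⟨mem_powerset.2 (insert_subset hv hS.1), mem_insert_self v S⟩
  · intro S hS
    rw [mem_coe, mem_filter, mem_powerset] at hS
    exact mem_powerset.2 (erase_subset_erase v hS.1)
  · intro S hS
    exact erase_insert (subset_erase.1 (mem_powerset.1 hS)).2
  · intro S hS
    exact insert_erase (mem_filter.1 hS).2

section

variable {α : Type*} [DecidableEq α] {V : Finset α} {𝓜 : Finset (Finset α)}

lemma card_le_card_filter_mem_of_erase_mem (hV𝓜 : V ∈ 𝓜) {B : Finset α} (hBV : B ⊆ V)
    (hB : ∀ u ∈ B, V.erase u ∈ 𝓜) {v : α} (hv : v ∈ B) :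
    #B ≤ #{M ∈ 𝓜 | v ∈ M} := by
  have hvV : v ∈ V := hBV hv
  have hVnot : V ∉ (B.erase v).image V.erase := by
    simp only [mem_image, not_exists, not_and]
    exact fun u hu => erase_ne_self.2 (hBV (mem_of_mem_erase hu))
  calc #B = #(insert V ((B.erase v).image V.erase)) := by
        rw [card_insert_of_notMem hVnot,
          card_image_of_injOn ((erase_injOn V).mono (coe_subset.2 ((erase_subset v B).trans hBV))),
          card_erase_add_one hv]
    _ ≤ #{M ∈ 𝓜 | v ∈ M} := by
        refine card_le_card (insert_subset (mem_filter.2 ⟨hV𝓜, hvV⟩) ?_)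
        simp only [image_subset_iff, mem_filter]
        exact fun u hu => ⟨hB u (mem_of_mem_erase hu), mem_erase.2 ⟨(ne_of_mem_erase hu).symm, hvV⟩⟩

lemma card_filter_card_filter_mem_le_of_upClosed (h𝓜 : 𝓜 ⊆ V.powerset)
    (hup : ∀ M ∈ 𝓜, ∀ M', M ⊆ M' → M' ⊆ V → M' ∈ 𝓜) {c : ℕ} (hc : c < #𝓜) :
    #{v ∈ V | #{M ∈ 𝓜 | v ∈ M} ≤ c} ≤ c := by
  set B := {v ∈ V | #{M ∈ 𝓜 | v ∈ M} ≤ c}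
  rcases B.eq_empty_or_nonempty with hB | ⟨v, hv⟩
  · simp [hB]
  have hcoatom : ∀ u ∈ B, V.erase u ∈ 𝓜 := by
    intro u hu
    obtain ⟨M, hM, hMu⟩ := exists_mem_notMem_of_card_lt_card ((mem_filter.1 hu).2.trans_lt hc)
    have huM : u ∉ M := fun huM => hMu (mem_filter.2 ⟨hM, huM⟩)
    exact hup M hM _ (subset_erase.2 ⟨mem_powerset.1 (h𝓜 hM), huM⟩) (erase_subset u V)
  obtain ⟨M, hM⟩ := card_pos.1 (c.zero_le.trans_lt hc)
  have hV𝓜 : V ∈ 𝓜 := hup M hM V (mem_powerset.1 (h𝓜 hM)) subset_rfl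
  exact (card_le_card_filter_mem_of_erase_mem hV𝓜 (filter_subset _ _) hcoatom hv).trans
    (mem_filter.1 hv).2

lemma card_filter_mem_add_card_filter_mem_sdiff {𝓗 : Finset (Finset α)} (h𝓗 : 𝓗 ⊆ V.powerset)
    {v : α} (hv : v ∈ V) :
    #{H ∈ 𝓗 | v ∈ H} + #{M ∈ V.powerset \ 𝓗 | v ∈ M} = 2 ^ (#V - 1) := by
  rw [← card_union_of_disjoint (disjoint_filter_filter disjoint_sdiff), ← filter_union,
    union_sdiff_of_subset h𝓗, card_filter_mem_powerset hv]

lemma Hereditary.upClosed_powerset_sdiff {𝓗 : Finset (Finset α)} (hher : Hereditary 𝓗) :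
    ∀ M ∈ V.powerset \ 𝓗, ∀ M', M ⊆ M' → M' ⊆ V → M' ∈ V.powerset \ 𝓗 := by
  intro M hM M' hMM' hM'V
  rw [mem_sdiff] at hM ⊢
  exact ⟨mem_powerset.2 hM'V, fun hM' => hM.2 (hher M' hM' M hMM')⟩

end

/-- Lemma 3.2(1): if `𝓗` is a hereditary family on a `d`-set `V` with
`|𝓗| ≤ 2^d − c − 1`, then at least `d − c` vertices of `V` have degree at most
`2^{d−1} − c − 1` in `𝓗`. -/
theorem local_lemma_low_degrees {α : Type*} [DecidableEq α] (d c : ℕ)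
    (V : Finset α) (hV : V.card = d)
    (𝓗 : Finset (Finset α)) (h𝓗 : 𝓗 ⊆ V.powerset) (hher : Hereditary 𝓗)
    (hcard : (𝓗.card : ℤ) ≤ 2 ^ d - c - 1) :
    (d : ℤ) - c ≤
      ((V.filter fun v =>
        ((𝓗.filter fun H => v ∈ H).card : ℤ) ≤ 2 ^ (d - 1) - c - 1).card : ℤ) := by
  set 𝓜 := V.powerset \ 𝓗
  have hc : c < #𝓜 := by
    rw [card_sdiff_of_subset h𝓗, card_powerset, hV]
    have : #𝓗 + c < 2 ^ d := by zify; linarith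
    omega
  have hlow : ∀ v ∈ V, ((#{H ∈ 𝓗 | v ∈ H} : ℤ) ≤ 2 ^ (d - 1) - c - 1 ↔
      ¬ #{M ∈ 𝓜 | v ∈ M} ≤ c) := by
    intro v hv
    have hsum : #{H ∈ 𝓗 | v ∈ H} + #{M ∈ 𝓜 | v ∈ M} = 2 ^ (d - 1) :=
      hV ▸ card_filter_mem_add_card_filter_mem_sdiff h𝓗 hv
    zify at hsum
    omega
  rw [filter_congr hlow]
  have hsplit := card_filter_add_card_filter_not (s := V) (fun v => #{M ∈ 𝓜 | v ∈ M} ≤ c)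
  have hhigh : #{v ∈ V | #{M ∈ 𝓜 | v ∈ M} ≤ c} ≤ c :=
    card_filter_card_filter_mem_le_of_upClosed sdiff_subset hher.upClosed_powerset_sdiff hc
  omega
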